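/- Let u be an endomorphism of an F-vector space V and let (V_α)_{α∈κ} be a stratification of the F[t]-module V^u with associated vector sequence (x_α). Suppose that whenever κ has a maximum M, the quotient at M is infinite-dimensional. Then for any connector v of u with respect to (x_α), the endomorphism u + v is elementary. -/

import Mathlib

/-!
The vectors `t^k x_α` with `k < n_α` form an `F`-basis of `V`, which we order lexicographically
by `(α, k)`; this is a well-order. In it, `u + v` sends each basis vector to its successor modulo
the span of the earlier ones: `u` multiplies by `t` inside a block, and at the end of a finite
block the connector passes to `x_{α+1}` (a finite block is never the last, so `α + 1` exists).
Every index is `s^j p` for a unique non-successor `p` and `j ∈ ℕ`, `s` the successor map, so the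
family `(u + v)^j x_p` is unitriangular with respect to the basis and hence is itself an
`F`-basis. That says exactly that `V^{u+v}` is free over `F[t]` on the `x_p`.
-/

open Polynomial

/-- The sum `Σ_{β<α} V_β` of the earlier terms of a family of submodules. -/
def prevSum {R V : Type*} [CommRing R] [AddCommGroup V] [Module R V]
    {D : Type*} [LinearOrder D] (W : D → Submodule R V) (α : D) : Submodule R V :=
  ⨆ β, ⨆ _ : β < α, W β

/-- `x` is a vector sequence associated to the family of submodules `W`:
each `x α` generates `W α` over `Σ_{β<α} W β`, and lies outside the latter. -/
def IsVectorSeq {R V : Type*} [CommRing R] [AddCommGroup V] [Module R V]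
    {D : Type*} [LinearOrder D] (W : D → Submodule R V) (x : D → V) : Prop :=
  ∀ α : D, x α ∉ prevSum W α ∧ W α = Submodule.span R {x α} ⊔ prevSum W α

/-- `n` is the `F`-dimension of the quotient `W α / Σ_{β<α} W β`, i.e. the
degree of the minimal (monic) polynomial annihilating the class of `x α`. -/
def HasQuotDim {F V : Type*} [Field F] [AddCommGroup V] [Module (Polynomial F) V]
    {D : Type*} [LinearOrder D] (W : D → Submodule (Polynomial F) V) (x : D → V)
    (α : D) (n : ℕ) : Prop :=
  (∃ p : Polynomial F, p.Monic ∧ p.natDegree = n ∧ p • x α ∈ prevSum W α) ∧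
  ∀ p : Polynomial F, p ≠ 0 → p • x α ∈ prevSum W α → n ≤ p.natDegree

/-- `v` is a connector for `u` with respect to the vector sequence `x` of the
stratification `W` of `V^u`: on the basis `(t^k • x α)_{α, 0 ≤ k < n_α}`, for
each `α` with `n_α` finite it sends `t^{n_α - 1} • x α` to `x_{α+1}` modulo
`W α` (where `α + 1` is the successor of `α`) and every other basis vector
to `0`. -/
def IsConnector {F V : Type*} [Field F] [AddCommGroup V] [Module F V]
    {D : Type*} [LinearOrder D] (u : Module.End F V) (v : Module.End F V)
    (W : D → Submodule (Polynomial F) (Module.AEval' u))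
    (x : D → Module.AEval' u) : Prop :=
  ∀ α : D,
    (∀ n : ℕ, HasQuotDim W x α n →
      (∀ k : ℕ, k + 1 < n →
        v ((u ^ k) ((Module.AEval'.of u).symm (x α))) = 0) ∧
      (∀ β : D, α < β → (∀ γ : D, α < γ → β ≤ γ) →
        Module.AEval'.of u (v ((u ^ (n - 1)) ((Module.AEval'.of u).symm (x α))))
          - x β ∈ W α)) ∧
    ((∀ n : ℕ, ¬ HasQuotDim W x α n) →
      ∀ k : ℕ, v ((u ^ k) ((Module.AEval'.of u).symm (x α))) = 0)

open Set Submodule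

section Triangular

variable {R K M ι : Type*} [AddCommGroup M] [LinearOrder ι]

theorem linearIndependent_of_notMem_span_image_Iio [DivisionRing K] [Module K M] {v : ι → M}
    (hv : ∀ i, v i ∉ span K (v '' Iio i)) : LinearIndependent K v := by
  classical
  rw [← linearIndepOn_univ_iff]
  refine linearIndepOn_of_finite _ fun t _ ht => ?_
  rw [← ht.coe_toFinset]
  induction ht.toFinset using Finset.induction_on_max with
  | empty => simp
  | insert a s hlt ih =>
    rw [Finset.coe_insert]
    exact ih.insert fun h => hv a (span_mono (image_mono fun b hb => hlt b hb) h)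

theorem LinearIndependent.of_sub_mem_span_image_Iio [DivisionRing K] [Module K M] {e g : ι → M}
    (he : LinearIndependent K e) (h : ∀ i, g i - e i ∈ span K (e '' Iio i)) :
    LinearIndependent K g := by
  refine linearIndependent_of_notMem_span_image_Iio fun i hi => ?_
  have hle : span K (g '' Iio i) ≤ span K (e '' Iio i) := span_le.2 <| by
    rintro _ ⟨j, hj, rfl⟩
    simpa using add_mem (span_mono (image_mono (Iio_subset_Iio hj.le)) (h j))
      (subset_span ⟨j, hj, rfl⟩)
  exact he.notMem_span_image (s := Iio i) self_notMem_Iio (by simpa using sub_mem (hle hi) (h i))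

variable [Ring R] [Module R M] [WellFoundedLT ι]

theorem span_image_Iio_le_of_sub_mem_span_image_Iio {e g : ι → M}
    (h : ∀ i, g i - e i ∈ span R (e '' Iio i)) (i : ι) :
    span R (e '' Iio i) ≤ span R (g '' Iio i) := by
  induction i using WellFoundedLT.induction with
  | _ i ih =>
  refine span_le.2 ?_
  rintro _ ⟨j, hj, rfl⟩
  have hg : g j ∈ span R (g '' Iio i) := subset_span ⟨j, hj, rfl⟩
  have hd : g j - e j ∈ span R (g '' Iio i) :=
    span_mono (image_mono (Iio_subset_Iio hj.le)) (ih j hj (h j))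
  simpa using sub_mem hg hd

theorem span_range_le_of_sub_mem_span_image_Iio {e g : ι → M}
    (h : ∀ i, g i - e i ∈ span R (e '' Iio i)) : span R (range e) ≤ span R (range g) := by
  refine span_le.2 ?_
  rintro _ ⟨i, rfl⟩
  have hd : g i - e i ∈ span R (range g) :=
    span_mono (image_subset_range _ _) (span_image_Iio_le_of_sub_mem_span_image_Iio h i (h i))
  simpa using sub_mem (subset_span (mem_range_self i)) hd

end Triangular

theorem Function.Injective.bijective_iterate_compl_range {α : Type*} [Preorder α]
    [WellFoundedLT α] {f : α → α} (hf : Injective f) (hlt : ∀ a, a < f a) :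
    Bijective fun p : ((range f)ᶜ : Set α) × ℕ => f^[p.2] p.1 := by
  refine ⟨?_, fun b => ?_⟩
  · rintro ⟨⟨a, ha⟩, j⟩ ⟨⟨a', ha'⟩, j'⟩ (h : f^[j] a = f^[j'] a')
    induction j generalizing j' with
    | zero =>
      cases j' with
      | zero => simpa using h
      | succ j' => exact (ha ⟨_, (Function.iterate_succ_apply' f j' a').symm.trans h.symm⟩).elim
    | succ j ih =>
      cases j' with
      | zero => exact (ha' ⟨_, (Function.iterate_succ_apply' f j a).symm.trans h⟩).elim
      | succ j' =>
        simp only [Function.iterate_succ_apply'] at h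
        simpa using ih j' (hf h)
  · induction b using WellFoundedLT.induction with
    | _ b ih =>
    by_cases hb : b ∈ range f
    · obtain ⟨c, rfl⟩ := hb
      obtain ⟨⟨a, j⟩, hc⟩ := ih c (hlt c)
      refine ⟨(a, j + 1), ?_⟩
      simpa [Function.iterate_succ_apply'] using congrArg f hc
    · exact ⟨⟨⟨b, hb⟩, 0⟩, rfl⟩

section PolynomialModule

variable {F N ι : Type*} [Field F] [AddCommGroup N] [Module F[X] N] [Module F N]
  [IsScalarTower F F[X] N]

theorem linearIndependent_of_linearIndependent_X_pow_smul {y : ι → N}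
    (h : LinearIndependent F fun p : ι × ℕ => (X ^ p.2 : F[X]) • y p.1) :
    LinearIndependent F[X] y := by
  classical
  rw [linearIndependent_iff'] at h ⊢
  intro s g hg i hi
  set K := s.biUnion fun i => (g i).support
  have hexpand :
      ∀ i ∈ s, g i • y i = ∑ k ∈ K, (g i).coeff k • (X ^ k : F[X]) • y i := by
    intro i hi
    calc g i • y i = ∑ k ∈ (g i).support, (g i).coeff k • (X ^ k : F[X]) • y i := by
          conv_lhs => rw [(g i).as_sum_support_C_mul_X_pow]
          simp only [Finset.sum_smul, C_mul', smul_assoc]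
      _ = _ := Finset.sum_subset (Finset.subset_biUnion_of_mem (fun i => (g i).support) hi)
          fun k _ hk => by rw [Polynomial.notMem_support_iff.1 hk, zero_smul]
  have hcoeff := h (s ×ˢ K) (fun p => (g p.1).coeff p.2) <| by
    rw [Finset.sum_product, ← hg]
    exact Finset.sum_congr rfl fun i hi => (hexpand i hi).symm
  ext k
  by_contra hk
  exact hk (hcoeff (i, k) (Finset.mem_product.2
    ⟨hi, Finset.mem_biUnion.2 ⟨i, hi, Polynomial.mem_support_iff.2 hk⟩⟩))

theorem span_eq_top_of_span_X_pow_smul_eq_top {y : ι → N}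
    (h : span F (range fun p : ι × ℕ => (X ^ p.2 : F[X]) • y p.1) = ⊤) :
    span F[X] (range y) = ⊤ := by
  rw [← restrictScalars_eq_top_iff F, eq_top_iff, ← h, span_le]
  rintro _ ⟨⟨i, k⟩, rfl⟩
  exact smul_mem _ _ (subset_span (mem_range_self i))

theorem span_X_pow_smul_eq_map_degreeLT (m : N) (n : ℕ) :
    span F ((fun i => (X ^ i : F[X]) • m) '' Iio n) =
      (degreeLT F n).map ((LinearMap.toSpanSingleton F[X] N m).restrictScalars F) := by
  classical
  rw [degreeLT_eq_span_X_pow, map_span, Finset.coe_image, Finset.coe_range, image_image]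
  rfl

theorem exists_degree_lt_sub_smul_mem {P : Submodule F[X] N} {m z : N} {n : ℕ}
    (hz : z ∈ P.restrictScalars F ⊔ span F ((fun i => (X ^ i : F[X]) • m) '' Iio n)) :
    ∃ q : F[X], q.degree < n ∧ z - q • m ∈ P := by
  obtain ⟨a, ha, b, hb, rfl⟩ := mem_sup.1 hz
  rw [span_X_pow_smul_eq_map_degreeLT] at hb
  obtain ⟨q, hq, rfl⟩ := hb
  exact ⟨q, mem_degreeLT.1 hq, by simpa using ha⟩

theorem smul_mem_span_X_pow_smul (m : N) (q : F[X]) :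
    q • m ∈ span F ((fun i => (X ^ i : F[X]) • m) '' Iio (q.natDegree + 1)) := by
  rw [span_X_pow_smul_eq_map_degreeLT]
  refine ⟨q, mem_degreeLT.2 (degree_le_natDegree.trans_lt ?_), rfl⟩
  exact_mod_cast q.natDegree.lt_succ_self

theorem smul_mem_sup_span_X_pow_smul {P : Submodule F[X] N} {m : N} {p : F[X]} (hp : p.Monic)
    (hpm : p • m ∈ P) (q : F[X]) :
    q • m ∈
      P.restrictScalars F ⊔ span F ((fun i => (X ^ i : F[X]) • m) '' Iio p.natDegree) := by
  have hdiv : q • m = (q /ₘ p) • p • m + (q %ₘ p) • m := by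
    rw [← mul_smul, mul_comm, ← add_smul, add_comm, modByMonic_add_div]
  rw [hdiv]
  refine add_mem (mem_sup_left (smul_mem P _ hpm)) (mem_sup_right ?_)
  rw [span_X_pow_smul_eq_map_degreeLT]
  refine ⟨q %ₘ p, mem_degreeLT.2 ?_, rfl⟩
  rw [← degree_eq_natDegree hp.ne_zero]
  exact degree_modByMonic_lt q hp

end PolynomialModule

section Stratification

variable {F M D : Type*} [Field F] [AddCommGroup M] [Module F[X] M] [LinearOrder D]
  {W : D → Submodule F[X] M} {x : D → M}

variable (W x) in
/-- The dimension `n_α` of the `α`-th quotient, `⊤` when it is infinite. -/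
noncomputable def quotDim (α : D) : ℕ∞ :=
  sInf ((fun p : F[X] => (p.natDegree : ℕ∞)) '' {p | p ≠ 0 ∧ p • x α ∈ prevSum W α})

theorem quotDim_le_natDegree {α : D} {p : F[X]} (hp : p ≠ 0) (h : p • x α ∈ prevSum W α) :
    quotDim W x α ≤ p.natDegree :=
  sInf_le ⟨p, ⟨hp, h⟩, rfl⟩

theorem exists_monic_of_quotDim_eq {α : D} {n : ℕ} (h : quotDim W x α = n) :
    ∃ p : F[X], p.Monic ∧ p.natDegree = n ∧ p • x α ∈ prevSum W α := by
  have hne : ((fun p : F[X] => (p.natDegree : ℕ∞)) ''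
      {p | p ≠ 0 ∧ p • x α ∈ prevSum W α}).Nonempty := by
    by_contra hempty
    rw [not_nonempty_iff_eq_empty] at hempty
    simp [quotDim, hempty] at h
  obtain ⟨p, ⟨hp, hpx⟩, hdeg⟩ := csInf_mem hne
  have hc : p.leadingCoeff⁻¹ ≠ 0 := inv_ne_zero (leadingCoeff_ne_zero.2 hp)
  refine ⟨p * C p.leadingCoeff⁻¹, monic_mul_leadingCoeff_inv hp, ?_, ?_⟩
  · rw [natDegree_mul_C hc]
    exact ENat.natCast_inj.1 (hdeg.trans h)
  · rw [mul_comm, mul_smul]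
    exact smul_mem _ _ hpx

theorem hasQuotDim_iff_quotDim_eq {α : D} {n : ℕ} :
    HasQuotDim W x α n ↔ quotDim W x α = n := by
  refine ⟨fun ⟨⟨p, hp, hdeg, hpx⟩, hmin⟩ => le_antisymm ?_ ?_, fun h => ⟨?_, ?_⟩⟩
  · exact hdeg ▸ quotDim_le_natDegree hp.ne_zero hpx
  · exact le_sInf <| by
      rintro _ ⟨q, ⟨hq, hqx⟩, rfl⟩
      exact Nat.cast_le.2 (hmin q hq hqx)
  · exact exists_monic_of_quotDim_eq h
  · intro p hp hpx
    exact_mod_cast h ▸ quotDim_le_natDegree hp hpx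

theorem quotDim_pos (hx : IsVectorSeq W x) (α : D) : 0 < quotDim W x α := by
  refine Order.one_le_iff_pos.1 (le_sInf ?_)
  rintro _ ⟨p, ⟨hp, hpx⟩, rfl⟩
  refine Nat.one_le_cast.2 (Nat.pos_of_ne_zero fun hdeg => (hx α).1 ?_)
  rw [eq_C_of_natDegree_eq_zero hdeg] at hp hpx
  have hc : p.coeff 0 ≠ 0 := fun h => hp (by rw [h, C_0])
  simpa [← mul_smul, ← C_mul, inv_mul_cancel₀ hc] using smul_mem _ (C (p.coeff 0)⁻¹) hpx

theorem le_prevSum {δ β : D} (h : δ < β) : W δ ≤ prevSum W β :=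
  le_iSup₂ (f := fun γ (_ : γ < β) => W γ) δ h

variable (W x) in
abbrev BasisIndex := {p : D ×ₗ ℕ // ((ofLex p).2 : ℕ∞) < quotDim W x (ofLex p).1}

abbrev BasisIndex.level (p : BasisIndex W x) : D := (ofLex p.1).1

abbrev BasisIndex.deg (p : BasisIndex W x) : ℕ := (ofLex p.1).2

theorem BasisIndex.deg_lt (p : BasisIndex W x) : (p.deg : ℕ∞) < quotDim W x p.level :=
  p.2

theorem quotDim_eq_of_not_lt {p : BasisIndex W x}
    (h : ¬((p.deg + 1 : ℕ) : ℕ∞) < quotDim W x p.level) :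
    quotDim W x p.level = (p.deg + 1 : ℕ) :=
  le_antisymm (not_lt.1 h) (by exact_mod_cast Order.add_one_le_of_lt p.deg_lt)

theorem not_isMax_of_quotDim_eq (hlen : ∀ α, IsMax α → quotDim W x α = ⊤) {α : D}
    {n : ℕ} (h : quotDim W x α = n) : ¬IsMax α :=
  fun hmax => ENat.top_ne_natCast n ((hlen α hmax).symm.trans h)

theorem BasisIndex.lt_iff {p q : BasisIndex W x} :
    p < q ↔ p.level < q.level ∨ p.level = q.level ∧ p.deg < q.deg :=
  Prod.Lex.lt_iff

theorem BasisIndex.le_iff {p q : BasisIndex W x} :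
    p ≤ q ↔ p.level < q.level ∨ p.level = q.level ∧ p.deg ≤ q.deg :=
  Prod.Lex.le_iff

variable (W x) in
noncomputable def basisVec (p : BasisIndex W x) : M := (X ^ p.deg : F[X]) • x p.level

theorem basisVec_mk (β : D) (r : ℕ) (h : (r : ℕ∞) < quotDim W x β) :
    basisVec W x ⟨toLex (β, r), h⟩ = (X ^ r : F[X]) • x β :=
  rfl

theorem basisVec_mem (hx : IsVectorSeq W x) (p : BasisIndex W x) :
    basisVec W x p ∈ W p.level := by
  refine smul_mem _ _ ?_
  rw [(hx _).2]
  exact mem_sup_left (mem_span_singleton_self _)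

variable [Module F M] [IsScalarTower F F[X] M]

theorem X_pow_smul_notMem_sup_span {β : D} {r : ℕ} (hr : (r : ℕ∞) < quotDim W x β) :
    (X ^ r : F[X]) • x β ∉ (prevSum W β).restrictScalars F ⊔
      span F ((fun i => (X ^ i : F[X]) • x β) '' Iio r) := by
  intro hmem
  obtain ⟨q, hq, hqx⟩ := exists_degree_lt_sub_smul_mem hmem
  rw [← sub_smul] at hqx
  have hdeg : (X ^ r - q).natDegree = r := natDegree_eq_of_degree_eq_some <| by
    rw [degree_sub_eq_left_of_degree_lt (by rwa [degree_X_pow]), degree_X_pow]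
  have := quotDim_le_natDegree (monic_X_pow_sub hq).ne_zero hqx
  exact absurd hr (not_lt.2 (hdeg ▸ this))

theorem span_basisVec_Iio_le (hx : IsVectorSeq W x) (p : BasisIndex W x) :
    span F (basisVec W x '' Iio p) ≤ (prevSum W p.level).restrictScalars F ⊔
      span F ((fun i => (X ^ i : F[X]) • x p.level) '' Iio p.deg) := by
  refine span_le.2 ?_
  rintro _ ⟨q, hq, rfl⟩
  rcases BasisIndex.lt_iff.1 hq with hlt | ⟨heq, hlt⟩
  · exact mem_sup_left (le_prevSum hlt (basisVec_mem hx q))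
  · exact mem_sup_right (subset_span ⟨q.deg, hlt, by rw [basisVec, heq]⟩)

theorem linearIndependent_basisVec (hx : IsVectorSeq W x) :
    LinearIndependent F (basisVec W x) :=
  linearIndependent_of_notMem_span_image_Iio fun p h =>
    X_pow_smul_notMem_sup_span p.deg_lt (span_basisVec_Iio_le hx p h)

theorem restrictScalars_le_span_basisVec [WellFoundedLT D] (hx : IsVectorSeq W x) (β : D) :
    (W β).restrictScalars F ≤ span F (basisVec W x '' {q | q.level ≤ β}) := by
  induction β using WellFoundedLT.induction with
  | _ β ih =>
  have hprev :
      (prevSum W β).restrictScalars F ≤ span F (basisVec W x '' {q | q.level ≤ β}) := by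
    simp only [prevSum, restrictScalars_iSup]
    exact iSup₂_le fun δ hδ =>
      (ih δ hδ).trans (span_mono (image_mono fun q hq => le_trans hq hδ.le))
  have hlow : ∀ n : ℕ, (n : ℕ∞) ≤ quotDim W x β →
      span F ((fun i => (X ^ i : F[X]) • x β) '' Iio n) ≤
        span F (basisVec W x '' {q | q.level ≤ β}) := by
    refine fun n hn => span_le.2 ?_
    rintro _ ⟨i, hi, rfl⟩
    have hi' : (i : ℕ∞) < quotDim W x β := lt_of_lt_of_le (by exact_mod_cast hi) hn
    exact subset_span ⟨⟨toLex (β, i), hi'⟩, le_rfl, rfl⟩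
  rw [(hx β).2, restrictScalars_sup]
  refine sup_le ?_ hprev
  intro z hz
  obtain ⟨q, rfl⟩ := mem_span_singleton.1 hz
  cases h : quotDim W x β with
  | top => exact hlow _ (h ▸ le_top) (smul_mem_span_X_pow_smul _ q)
  | coe n =>
    obtain ⟨p, hp, rfl, hpx⟩ := exists_monic_of_quotDim_eq h
    exact sup_le hprev (hlow _ h.ge) (smul_mem_sup_span_X_pow_smul hp hpx q)

theorem span_basisVec_eq_top [WellFoundedLT D] (hx : IsVectorSeq W x) (htop : ⨆ α, W α = ⊤) :
    span F (range (basisVec W x)) = ⊤ := by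
  rw [eq_top_iff, ← restrictScalars_top F F[X] M, ← htop, restrictScalars_iSup]
  exact iSup_le fun β =>
    (restrictScalars_le_span_basisVec hx β).trans (span_mono (image_subset_range _ _))

end Stratification

section Connector

variable {F M D : Type*} [Field F] [AddCommGroup M] [Module F[X] M] [LinearOrder D] [SuccOrder D]
  {W : D → Submodule F[X] M} {x : D → M}

/-- Successor of `p` among the basis indices, for the lexicographic order. -/
noncomputable def nextIndex (hx : IsVectorSeq W x) (p : BasisIndex W x) : BasisIndex W x :=
  if h : ((p.deg + 1 : ℕ) : ℕ∞) < quotDim W x p.level then ⟨toLex (p.level, p.deg + 1), h⟩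
  else ⟨toLex (Order.succ p.level, 0), by exact_mod_cast quotDim_pos hx _⟩

theorem lt_nextIndex (hx : IsVectorSeq W x) (hlen : ∀ α, IsMax α → quotDim W x α = ⊤)
    (p : BasisIndex W x) : p < nextIndex hx p := by
  rw [nextIndex]
  split_ifs with h
  · exact BasisIndex.lt_iff.2 (Or.inr ⟨rfl, p.deg.lt_succ_self⟩)
  · exact BasisIndex.lt_iff.2 (Or.inl (Order.lt_succ_of_not_isMax
      (not_isMax_of_quotDim_eq hlen (quotDim_eq_of_not_lt h))))

theorem nextIndex_le_of_lt (hx : IsVectorSeq W x) {p q : BasisIndex W x} (hpq : p < q) :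
    nextIndex hx p ≤ q := by
  rw [nextIndex]
  split_ifs with h
  · rcases BasisIndex.lt_iff.1 hpq with hlt | ⟨heq, hlt⟩
    · exact BasisIndex.le_iff.2 (Or.inl hlt)
    · exact BasisIndex.le_iff.2 (Or.inr ⟨heq, hlt⟩)
  · rcases BasisIndex.lt_iff.1 hpq with hlt | ⟨heq, hlt⟩
    · rcases (Order.succ_le_of_lt hlt).lt_or_eq with hlt' | heq'
      · exact BasisIndex.le_iff.2 (Or.inl hlt')
      · exact BasisIndex.le_iff.2 (Or.inr ⟨heq', Nat.zero_le _⟩)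
    · have hq := q.deg_lt
      rw [← heq, quotDim_eq_of_not_lt h] at hq
      exact absurd (by exact_mod_cast hq : q.deg < p.deg + 1) (by omega)

theorem nextIndex_injective (hx : IsVectorSeq W x)
    (hlen : ∀ α, IsMax α → quotDim W x α = ⊤) : Function.Injective (nextIndex hx) := by
  intro p q h
  by_contra hne
  rcases lt_or_gt_of_ne hne with hlt | hlt
  · exact (nextIndex_le_of_lt hx hlt).not_gt (h ▸ lt_nextIndex hx hlen q)
  · exact (nextIndex_le_of_lt hx hlt).not_gt (h ▸ lt_nextIndex hx hlen p)

variable [Module F M] [IsScalarTower F F[X] M]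

variable (W x) in
/-- `w` behaves like `t + v` for a connector `v`: it multiplies by `t` every basis vector
`t^k x_α` except the last one of a finite block, which it sends to `x_{α+1}` modulo `W α`. -/
structure IsShiftPlusConnector (w : M →ₗ[F] M) : Prop where
  apply_of_lt : ∀ α (k : ℕ), ((k + 1 : ℕ) : ℕ∞) < quotDim W x α →
    w ((X ^ k : F[X]) • x α) = (X ^ (k + 1) : F[X]) • x α
  apply_sub_mem : ∀ α (n : ℕ), quotDim W x α = n →
    w ((X ^ (n - 1) : F[X]) • x α) - x (Order.succ α) ∈ W α

variable [WellFoundedLT D] {w : M →ₗ[F] M}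

theorem IsShiftPlusConnector.apply_basisVec_sub_mem (hw : IsShiftPlusConnector W x w)
    (hx : IsVectorSeq W x) (hlen : ∀ α, IsMax α → quotDim W x α = ⊤) (p : BasisIndex W x) :
    w (basisVec W x p) - basisVec W x (nextIndex hx p) ∈
      span F (basisVec W x '' Iio (nextIndex hx p)) := by
  by_cases h : ((p.deg + 1 : ℕ) : ℕ∞) < quotDim W x p.level
  · have happly : w (basisVec W x p) = (X ^ (p.deg + 1) : F[X]) • x p.level :=
      hw.apply_of_lt _ _ h
    rw [nextIndex, dif_pos h, basisVec_mk, happly, sub_self]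
    exact zero_mem _
  · have hn := quotDim_eq_of_not_lt h
    have hmem := hw.apply_sub_mem _ _ hn
    rw [Nat.add_sub_cancel] at hmem
    rw [nextIndex, dif_neg h]
    refine span_mono (image_mono fun q hq => ?_) (restrictScalars_le_span_basisVec hx p.level ?_)
    · exact BasisIndex.lt_iff.2 (Or.inl (lt_of_le_of_lt hq
        (Order.lt_succ_of_not_isMax (not_isMax_of_quotDim_eq hlen hn))))
    · simpa [basisVec, BasisIndex.level, BasisIndex.deg] using hmem

theorem IsShiftPlusConnector.map_span_Iio_le (hw : IsShiftPlusConnector W x w)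
    (hx : IsVectorSeq W x) (hlen : ∀ α, IsMax α → quotDim W x α = ⊤) (p : BasisIndex W x) :
    (span F (basisVec W x '' Iio p)).map w ≤ span F (basisVec W x '' Iio (nextIndex hx p)) := by
  rw [map_span_le]
  rintro _ ⟨q, hq, rfl⟩
  have hle : Iio (nextIndex hx q) ⊆ Iio (nextIndex hx p) :=
    Iio_subset_Iio ((nextIndex_le_of_lt hx hq).trans (lt_nextIndex hx hlen p).le)
  have hnext : basisVec W x (nextIndex hx q) ∈ span F (basisVec W x '' Iio (nextIndex hx p)) :=
    subset_span ⟨_, (nextIndex_le_of_lt hx hq).trans_lt (lt_nextIndex hx hlen p), rfl⟩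
  simpa using add_mem (span_mono (image_mono hle) (hw.apply_basisVec_sub_mem hx hlen q)) hnext

theorem IsShiftPlusConnector.iterate_apply_basisVec_sub_mem (hw : IsShiftPlusConnector W x w)
    (hx : IsVectorSeq W x) (hlen : ∀ α, IsMax α → quotDim W x α = ⊤) (p : BasisIndex W x)
    (j : ℕ) : w^[j] (basisVec W x p) - basisVec W x ((nextIndex hx)^[j] p) ∈
      span F (basisVec W x '' Iio ((nextIndex hx)^[j] p)) := by
  induction j with
  | zero => simp
  | succ j ih =>
    rw [Function.iterate_succ_apply', Function.iterate_succ_apply']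
    set q := (nextIndex hx)^[j] p
    have hsplit : w (w^[j] (basisVec W x p)) - basisVec W x (nextIndex hx q) =
        (w (basisVec W x q) - basisVec W x (nextIndex hx q)) +
          w (w^[j] (basisVec W x p) - basisVec W x q) := by
      rw [map_sub]
      abel
    rw [hsplit]
    exact add_mem (hw.apply_basisVec_sub_mem hx hlen q)
      (hw.map_span_Iio_le hx hlen q (mem_map_of_mem ih))

theorem IsShiftPlusConnector.linearIndependent_and_span_eq_top (hw : IsShiftPlusConnector W x w)
    (hx : IsVectorSeq W x) (hlen : ∀ α, IsMax α → quotDim W x α = ⊤)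
    (htop : ⨆ α, W α = ⊤) :
    LinearIndependent F (fun p : ((range (nextIndex hx))ᶜ : Set (BasisIndex W x)) × ℕ =>
        w^[p.2] (basisVec W x p.1)) ∧
      span F (range fun p : ((range (nextIndex hx))ᶜ : Set (BasisIndex W x)) × ℕ =>
        w^[p.2] (basisVec W x p.1)) = ⊤ := by
  set f := fun p : ((range (nextIndex hx))ᶜ : Set (BasisIndex W x)) × ℕ =>
    w^[p.2] (basisVec W x p.1)
  let σ := Equiv.ofBijective _
    ((nextIndex_injective hx hlen).bijective_iterate_compl_range (lt_nextIndex hx hlen))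
  have htri : ∀ i, (f ∘ σ.symm) i - basisVec W x i ∈ span F (basisVec W x '' Iio i) := by
    intro i
    have hi : (nextIndex hx)^[(σ.symm i).2] (σ.symm i).1 = i := σ.apply_symm_apply i
    have := hw.iterate_apply_basisVec_sub_mem hx hlen (σ.symm i).1 (σ.symm i).2
    rwa [hi] at this
  refine ⟨?_, ?_⟩
  · have := (linearIndependent_basisVec hx).of_sub_mem_span_image_Iio htri
    rwa [← linearIndependent_equiv σ, Function.comp_assoc, σ.symm_comp_self] at this
  · rw [eq_top_iff, ← span_basisVec_eq_top hx htop, ← σ.symm.surjective.range_comp f]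
    exact span_range_le_of_sub_mem_span_image_Iio htri

end Connector

section Endomorphism

variable {F V : Type*} [Field F] [AddCommGroup V] [Module F V]

theorem Module.AEval'.symm_trans_of_iterate_conj (u w : Module.End F V) (m : Module.AEval' u)
    (j : ℕ) :
    ((Module.AEval'.of u).symm ≪≫ₗ Module.AEval'.of w) (((Module.AEval'.of u).conj w)^[j] m) =
      (X ^ j : F[X]) • ((Module.AEval'.of u).symm ≪≫ₗ Module.AEval'.of w) m := by
  have hsemiconj : Function.Semiconj ((Module.AEval'.of u).symm ≪≫ₗ Module.AEval'.of w)
      ((Module.AEval'.of u).conj w) ((X : F[X]) • ·) := fun m => by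
    simp [LinearEquiv.conj_apply, Module.AEval'.X_smul_of]
  rw [hsemiconj.iterate_right j m, smul_iterate]

theorem Module.AEval'.conj_add_apply_X_pow_smul (u v : Module.End F V) (m : Module.AEval' u)
    (k : ℕ) :
    (Module.AEval'.of u).conj (u + v) ((X ^ k : F[X]) • m) = (X ^ (k + 1) : F[X]) • m +
      Module.AEval'.of u (v ((u ^ k) ((Module.AEval'.of u).symm m))) := by
  obtain ⟨m, rfl⟩ := (Module.AEval'.of u).surjective m
  simp [LinearEquiv.conj_apply, Module.AEval'.X_pow_smul_of, pow_succ' u, Module.End.mul_apply]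

variable {D : Type*} [LinearOrder D] [SuccOrder D] {u v : Module.End F V}
  {W : D → Submodule F[X] (Module.AEval' u)} {x : D → Module.AEval' u}

theorem IsConnector.isShiftPlusConnector (hv : IsConnector u v W x) (hx : IsVectorSeq W x)
    (hlen : ∀ α, IsMax α → quotDim W x α = ⊤) :
    IsShiftPlusConnector W x ((Module.AEval'.of u).conj (u + v)) where
  apply_of_lt α k hk := by
    rw [Module.AEval'.conj_add_apply_X_pow_smul, add_eq_left,
      map_eq_zero_iff _ (LinearEquiv.injective _)]
    cases h : quotDim W x α with
    | top =>
      exact (hv α).2 (fun n hn => ENat.top_ne_natCast n (h ▸ hasQuotDim_iff_quotDim_eq.1 hn)) k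
    | coe n => exact ((hv α).1 n (hasQuotDim_iff_quotDim_eq.2 h)).1 k (by exact_mod_cast h ▸ hk)
  apply_sub_mem α n h := by
    have hnext := ((hv α).1 n (hasQuotDim_iff_quotDim_eq.2 h)).2 (Order.succ α)
      (Order.lt_succ_of_not_isMax (not_isMax_of_quotDim_eq hlen h)) fun _ => Order.succ_le_of_lt
    rw [Module.AEval'.conj_add_apply_X_pow_smul, add_sub_assoc]
    refine add_mem (smul_mem _ _ ?_) hnext
    rw [(hx α).2]
    exact mem_sup_left (mem_span_singleton_self _)

end Endomorphism

theorem elementary_of_connector_general (F : Type*) [Field F] (V : Type*) [AddCommGroup V]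
    [Module F V] (u : Module.End F V)
    (D : Type*) [LinearOrder D] [WellFoundedLT D]
    (W : D → Submodule (Polynomial F) (Module.AEval' u))
    (x : D → Module.AEval' u)
    (hx : IsVectorSeq W x) (htop : (⨆ α, W α) = ⊤)
    (hmax : ∀ M : D, (∀ β : D, β ≤ M) → ∀ n : ℕ, ¬ HasQuotDim W x M n)
    (v : Module.End F V) (hv : IsConnector u v W x) :
    Module.Free (Polynomial F) (Module.AEval' (u + v)) := by
  let _ : SuccOrder D := SuccOrder.ofLinearWellFoundedLT D
  have hlen : ∀ α, IsMax α → quotDim W x α = ⊤ := fun α hα => by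
    by_contra hne
    obtain ⟨n, hn⟩ := ENat.ne_top_iff_exists.1 hne
    exact hmax α hα.isTop n (hasQuotDim_iff_quotDim_eq.2 hn.symm)
  obtain ⟨hli, hspan⟩ :=
    (hv.isShiftPlusConnector hx hlen).linearIndependent_and_span_eq_top hx hlen htop
  let ι := ((range (nextIndex hx))ᶜ : Set (BasisIndex W x))
  let φ := (Module.AEval'.of u).symm ≪≫ₗ Module.AEval'.of (u + v)
  let y : ι → Module.AEval' (u + v) := fun p => φ (basisVec W x p)
  have hfamily : (fun p : ι × ℕ => (X ^ p.2 : F[X]) • y p.1) =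
      φ ∘ fun p => ((Module.AEval'.of u).conj (u + v))^[p.2] (basisVec W x p.1) := by
    ext p
    exact (Module.AEval'.symm_trans_of_iterate_conj u (u + v) _ p.2).symm
  refine Module.Free.of_basis (Module.Basis.mk (linearIndependent_of_linearIndependent_X_pow_smul
    (y := y) ?_) (span_eq_top_of_span_X_pow_smul_eq_top ?_).ge)
  · rw [hfamily]
    exact hli.map' _ φ.ker
  · rw [hfamily, range_comp, ← LinearEquiv.coe_coe, span_image, hspan, Submodule.map_top,
      LinearEquiv.range]

/-- If `(W α)` is a stratification of `V^u` with vector sequence `(x α)` such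
that the quotient at a maximal index (if any) is infinite-dimensional, then for
any connector `v`, the endomorphism `u + v` is elementary. -/
theorem elementary_of_connector (F : Type*) [Field F] (V : Type*) [AddCommGroup V]
    [Module F V] (u : Module.End F V)
    (D : Type*) [LinearOrder D] [WellFoundedLT D]
    (W : D → Submodule (Polynomial F) (Module.AEval' u))
    (x : D → Module.AEval' u)
    (hmono : Monotone W) (hx : IsVectorSeq W x) (htop : (⨆ α, W α) = ⊤)
    (hmax : ∀ M : D, (∀ β : D, β ≤ M) → ∀ n : ℕ, ¬ HasQuotDim W x M n)
    (v : Module.End F V) (hv : IsConnector u v W x) :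
    Module.Free (Polynomial F) (Module.AEval' (u + v)) :=
  elementary_of_connector_general F V u D W x hx htop hmax v hv
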